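/- Let c ∈ ℝ, η ∈ ℝ with η ≠ 0, and let u, v : U → ℝ be smooth functions on an open set U ⊆ ℝ² satisfying u_{xt} = (u² − v² + c)v_x + u, v_{xt} = (u² − v² + c)u_x + v on U. Define F₁₁ = −η√2·u_x, F₁₂ = (√2/η)v, F₂₁ = η², F₂₂ = 1/η² + u² − v² + c, F₃₁ = η√2·v_x, F₃₂ = −(√2/η)u. Then on U the structure equations with δ = 1 hold: −∂_t F₁₁ + ∂_x F₁₂ = F₃₁F₂₂ − F₃₂F₂₁, −∂_t F₂₁ + ∂_x F₂₂ = F₁₁F₃₂ − F₁₂F₃₁, −∂_t F₃₁ + ∂_x F₃₂ = F₁₁F₂₂ − F₁₂F₂₁; hence this system describes pseudospherical surfaces with these associated functions. -/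

import Mathlib

/-!
The first and third structure equations are the two equations of the system multiplied by
`±η√2`, once `∂_t` is moved through the constant factors. The second holds identically: `F₂₁`
is constant and `∂_x F₂₂ = 2(u u_x − v v_x)`, which is `F₁₁F₃₂ − F₁₂F₃₁` because `√2² = 2`.
-/

open Real

/-- Partial derivative in the `x` direction of a function on the `(x, t)` plane. -/
noncomputable def pdx (f : ℝ × ℝ → ℝ) (p : ℝ × ℝ) : ℝ := fderiv ℝ f p (1, 0)

/-- Partial derivative in the `t` direction of a function on the `(x, t)` plane. -/
noncomputable def pdt (f : ℝ × ℝ → ℝ) (p : ℝ × ℝ) : ℝ := fderiv ℝ f p (0, 1)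

/-- The structure equations of a surface of constant Gaussian curvature `-δ`. -/
def StructEqs (δ : ℝ) (U : Set (ℝ × ℝ)) (F11 F12 F21 F22 F31 F32 : ℝ × ℝ → ℝ) : Prop :=
  ∀ p ∈ U,
    -(pdt F11 p) + pdx F12 p = F31 p * F22 p - F32 p * F21 p ∧
    -(pdt F21 p) + pdx F22 p = F11 p * F32 p - F12 p * F31 p ∧
    -(pdt F31 p) + pdx F32 p = δ * (F11 p * F22 p - F12 p * F21 p)


lemma pdx_const_mul (a : ℝ) (f : ℝ × ℝ → ℝ) (p : ℝ × ℝ) :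
    pdx (fun q => a * f q) p = a * pdx f p := by
  simp [pdx, ← smul_eq_mul, ← Pi.smul_def, fderiv_const_smul_field]

lemma pdt_const_mul (a : ℝ) (f : ℝ × ℝ → ℝ) (p : ℝ × ℝ) :
    pdt (fun q => a * f q) p = a * pdt f p := by
  simp [pdt, ← smul_eq_mul, ← Pi.smul_def, fderiv_const_smul_field]

lemma pdt_const (a : ℝ) (p : ℝ × ℝ) : pdt (fun _ => a) p = 0 := by
  simp [pdt]

lemma pdx_const_add_sq_sub_sq_add_const (a c : ℝ) {u v : ℝ × ℝ → ℝ} {p : ℝ × ℝ}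
    (hu : DifferentiableAt ℝ u p) (hv : DifferentiableAt ℝ v p) :
    pdx (fun q => a + u q ^ 2 - v q ^ 2 + c) p = 2 * u p * pdx u p - 2 * v p * pdx v p := by
  have h : HasFDerivAt (fun q => a + u q ^ 2 - v q ^ 2 + c) _ p :=
    (((hasFDerivAt_const a p).add (hu.hasFDerivAt.pow 2)).sub (hv.hasFDerivAt.pow 2)).add_const c
  rw [pdx, h.fderiv]
  simp [pdx]

/-- The system `u_xt = (u² − v² + c)v_x + u`, `v_xt = (u² − v² + c)u_x + v`
describes pseudospherical surfaces. -/
theorem system_7mplrex1_describes_pss (c η : ℝ) (hη : η ≠ 0) (U : Set (ℝ × ℝ)) (hU : IsOpen U)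
    (u v : ℝ × ℝ → ℝ)
    (hu : ContDiffOn ℝ (⊤ : ℕ∞) u U) (hv : ContDiffOn ℝ (⊤ : ℕ∞) v U)
    (heq1 : ∀ p ∈ U, pdt (pdx u) p = (u p ^ 2 - v p ^ 2 + c) * pdx v p + u p)
    (heq2 : ∀ p ∈ U, pdt (pdx v) p = (u p ^ 2 - v p ^ 2 + c) * pdx u p + v p) :
    StructEqs 1 U
      (fun q => -(η * Real.sqrt 2) * pdx u q)
      (fun q => Real.sqrt 2 / η * v q)
      (fun _ => η ^ 2)
      (fun q => 1 / η ^ 2 + u q ^ 2 - v q ^ 2 + c)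
      (fun q => η * Real.sqrt 2 * pdx v q)
      (fun q => -(Real.sqrt 2 / η) * u q) := by
  intro p hp
  have hud : DifferentiableAt ℝ u p :=
    (hu.differentiableOn (by simp)).differentiableAt (hU.mem_nhds hp)
  have hvd : DifferentiableAt ℝ v p :=
    (hv.differentiableOn (by simp)).differentiableAt (hU.mem_nhds hp)
  refine ⟨?_, ?_, ?_⟩
  · rw [pdt_const_mul, pdx_const_mul, heq1 p hp]
    field_simp
    ring
  · rw [pdt_const, pdx_const_add_sq_sub_sq_add_const _ _ hud hvd]
    field_simp
    rw [Real.sq_sqrt zero_le_two]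
    ring
  · rw [pdt_const_mul, pdx_const_mul, heq2 p hp]
    field_simp
    ring
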